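/- arXiv:math/9806152 — 2 statements merged into one kernel-verified Lean document; each statement's English description precedes it below -/
import Mathlib

section
/- Let α, β be real numbers such that 1, α, β are linearly independent over ℚ. Then the skew product map T : ℝ³/ℤ³ → ℝ³/ℤ³, T(t, y₁, y₂) = (t + α, y₁ + t, y₂ + β), is ergodic with respect to Haar (Lebesgue) measure on the 3-torus. -/
/-!
A character `e_n` of the torus pulls back under the skew product to a unimodular constant times
the character `e_{A n}`, where `A (n₀, n₁, n₂) = (n₀ + n₁, n₁, n₂)`. Hence the Fourier
coefficients of an invariant `L²` function satisfy `|f̂(A n)| = |f̂(n)|`. If `n₁ ≠ 0` the orbit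
of `n` under `A` is infinite, so Parseval forces `f̂(n) = 0`; if `n₁ = 0` then `A n = n` and the
constant is `e(n₀ α + n₂ β) ≠ 1` unless `n = 0`, by the rational independence of `1, α, β`.
So every invariant function is constant, which is ergodicity.
-/

open MeasureTheory Filter Function UnitAddTorus
open scoped ComplexConjugate Topology

theorem Summable.eq_zero_of_injective_of_forall_eq {ι G : Type*} [AddCommGroup G]
    [TopologicalSpace G] [IsTopologicalAddGroup G] [T2Space G] {f : ι → G} (hf : Summable f)
    {w : ℕ → ι} (hw : Injective w) {c : G} (hc : ∀ k, f (w k) = c) : c = 0 := by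
  have h : Tendsto (f ∘ w) atTop (𝓝 0) := by
    rw [← Nat.cofinite_eq_atTop]
    exact hf.tendsto_cofinite_zero.comp hw.tendsto_cofinite
  simp only [comp_def, hc] at h
  exact tendsto_nhds_unique tendsto_const_nhds h

theorem ergodic_of_forall_ae_eq_const {α : Type*} [MeasurableSpace α] {μ : Measure α}
    [IsFiniteMeasure μ] {T : α → α} (hT : MeasurePreserving T μ μ)
    (h : ∀ f : α → ℂ, MemLp f 2 μ → f ∘ T = f → ∃ c, f =ᵐ[μ] fun _ => c) : Ergodic T μ := by
  refine ⟨hT, ⟨fun s hs hinv => ?_⟩⟩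
  have hinvf : s.indicator (fun _ => (1 : ℂ)) ∘ T = s.indicator fun _ => 1 := by
    ext x
    rw [comp_apply, ← Set.indicator_comp_right, hinv]
    rfl
  obtain ⟨c, hc⟩ := h _ ((memLp_const 1).indicator hs) hinvf
  exact (eventuallyConst_iff_exists_eventuallyEq.mpr ⟨c, hc⟩).of_indicator_const one_ne_zero

theorem LinearIndependent.eq_zero_of_int_combination_eq_int {α β : ℝ}
    (h : LinearIndependent ℚ ![(1 : ℝ), α, β]) {k n p : ℤ} (hk : n * α + p * β = k) :
    n = 0 ∧ p = 0 := by
  have hsum : ∑ i, (![(-k : ℚ), n, p] i) • (![(1 : ℝ), α, β] i) = 0 := by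
    simp [Fin.sum_univ_three, Rat.smul_def]
    linarith
  have hcoef := Fintype.linearIndependent_iff.mp h _ hsum
  exact ⟨by simpa using hcoef 1, by simpa using hcoef 2⟩

theorem fourier_mul_fourier_ne_one {α β : ℝ} (h : LinearIndependent ℚ ![(1 : ℝ), α, β])
    {n p : ℤ} (hnp : n ≠ 0 ∨ p ≠ 0) :
    fourier n (α : UnitAddCircle) * fourier p (β : UnitAddCircle) ≠ 1 := by
  intro h1
  rw [fourier_apply, fourier_apply, ← Circle.coe_mul, ← AddCircle.toCircle_add,
    ← Circle.coe_one, Circle.coe_inj, ← AddCircle.toCircle_zero (T := 1)] at h1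
  have h0 := AddCircle.injective_toCircle one_ne_zero h1
  rw [← AddCircle.coe_zsmul, ← AddCircle.coe_zsmul, ← AddCircle.coe_add,
    AddCircle.coe_eq_zero_iff] at h0
  obtain ⟨k, hk⟩ := h0
  have := h.eq_zero_of_int_combination_eq_int (k := k) (by simpa using hk.symm)
  omega

def MeasurableEquiv.piFinThree (α : Type*) [MeasurableSpace α] : (Fin 3 → α) ≃ᵐ α × α × α :=
  (piFinSuccAbove (fun _ => α) 0).trans (prodCongr (refl α) finTwoArrow)

@[simp]
theorem MeasurableEquiv.piFinThree_apply {α : Type*} [MeasurableSpace α] (x : Fin 3 → α) :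
    piFinThree α x = (x 0, x 1, x 2) := rfl

@[simp]
theorem MeasurableEquiv.piFinThree_symm_apply {α : Type*} [MeasurableSpace α] (p : α × α × α) :
    (piFinThree α).symm p = ![p.1, p.2.1, p.2.2] := by
  ext i; fin_cases i <;> rfl

theorem measurePreserving_piFinThree {α : Type*} [MeasurableSpace α] (μ : Measure α)
    [SigmaFinite μ] :
    MeasurePreserving (MeasurableEquiv.piFinThree α) (Measure.pi fun _ => μ) (μ.prod (μ.prod μ)) :=
  ((MeasurePreserving.id μ).prod (measurePreserving_finTwoArrow μ)).comp
    (measurePreserving_piFinSuccAbove (fun _ => μ) 0)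

theorem measurePreserving_skewProduct {G : Type*} [AddGroup G] [MeasurableSpace G]
    [MeasurableAdd₂ G] (μ : Measure G) [SFinite μ] [μ.IsAddRightInvariant] (a b : G) :
    MeasurePreserving (fun p : G × G × G => (p.1 + a, p.2.1 + p.1, p.2.2 + b))
      (μ.prod (μ.prod μ)) (μ.prod (μ.prod μ)) :=
  (measurePreserving_add_right μ a).skew_product
    (measurable_snd.fst.add measurable_fst |>.prodMk (measurable_snd.snd.add_const b))
    (ae_of_all _ fun x =>
      ((measurePreserving_add_right μ x).prod (measurePreserving_add_right μ b)).map_eq)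

namespace UnitAddTorus

-- Mathlib's Fourier theory on `UnitAddTorus` is stated for these (non-global) instances, which
-- normalise the measure on `ℝ / ℤ` as `AddCircle.haarAddCircle`.
attribute [local instance] instMeasureSpaceUnitAddCircle instIsProbabilityMeasureUnitAddCircleVolume

variable {d : Type*} [Fintype d]

theorem mFourierCoeff_eq_of_comp_eq {T : UnitAddTorus d → UnitAddTorus d}
    (hT : MeasurePreserving T volume volume) {f : UnitAddTorus d → ℂ}
    (hfm : AEStronglyMeasurable f volume) (hf : f ∘ T = f) {n m : d → ℤ} {c : ℂ}
    (hnm : ∀ x, mFourier n (T x) = c * mFourier m x) :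
    mFourierCoeff f n = conj c * mFourierCoeff f m := by
  have hint : AEStronglyMeasurable (fun t => mFourier (-n) t • f t) (Measure.map T volume) := by
    rw [hT.map_eq]
    exact (mFourier (-n)).continuous.aestronglyMeasurable.smul hfm
  calc mFourierCoeff f n = ∫ t, mFourier (-n) t • f t ∂(Measure.map T volume) := by
        rw [hT.map_eq, mFourierCoeff]
    _ = ∫ t, mFourier (-n) (T t) • f (T t) := integral_map hT.aemeasurable hint
    _ = ∫ t, conj c • (mFourier (-m) t • f t) := by
        congr 1 with t
        rw [mFourier_neg, mFourier_neg, hnm, map_mul, ← congrFun hf t, comp_apply, smul_eq_mul,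
          smul_eq_mul, smul_eq_mul, mul_assoc]
    _ = conj c * mFourierCoeff f m := integral_smul _ _

theorem ae_eq_const_of_mFourierCoeff_eq_zero (f : Lp ℂ 2 (volume : Measure (UnitAddTorus d)))
    (hf : ∀ n ≠ 0, mFourierCoeff f n = 0) : f =ᵐ[volume] fun _ => mFourierCoeff f 0 := by
  set c := mFourierCoeff f 0
  have hsingle : HasSum (fun n => mFourierCoeff f n • mFourierLp 2 n) (c • mFourierLp 2 0) :=
    hasSum_single 0 fun n hn => by rw [hf n hn, zero_smul]
  rw [(hasSum_mFourier_series_L2 f).unique hsingle]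
  filter_upwards [Lp.coeFn_smul c (mFourierLp 2 (0 : d → ℤ)),
    coeFn_mFourierLp 2 (0 : d → ℤ)] with x hsmul h0
  rw [hsmul, Pi.smul_apply, h0, mFourier_zero, ContinuousMap.one_apply, smul_eq_mul, mul_one]

theorem mFourierCoeff_eq_zero_of_injective_orbit (f : Lp ℂ 2 (volume : Measure (UnitAddTorus d)))
    {A : (d → ℤ) → (d → ℤ)} (hA : ∀ n, ‖mFourierCoeff f (A n)‖ = ‖mFourierCoeff f n‖)
    {n : d → ℤ} (hinj : Injective fun k : ℕ => A^[k] n) : mFourierCoeff f n = 0 := by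
  have horbit : ∀ k, ‖mFourierCoeff f (A^[k] n)‖ ^ 2 = ‖mFourierCoeff f n‖ ^ 2 := by
    intro k
    induction k with
    | zero => rfl
    | succ k ih => rw [iterate_succ_apply', hA, ih]
  simpa using (hasSum_sq_mFourierCoeff f).summable.eq_zero_of_injective_of_forall_eq hinj horbit

theorem ergodic_of_mFourier_comp {T : UnitAddTorus d → UnitAddTorus d}
    (hT : MeasurePreserving T volume volume) (A : (d → ℤ) → (d → ℤ)) (c : (d → ℤ) → ℂ)
    (hc : ∀ n, ‖c n‖ = 1) (hTA : ∀ n x, mFourier n (T x) = c n * mFourier (A n) x)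
    (horbit : ∀ n ≠ 0, (A n = n ∧ c n ≠ 1) ∨ Injective fun k : ℕ => A^[k] n) :
    Ergodic T volume := by
  refine ergodic_of_forall_ae_eq_const hT fun f hf hfT => ?_
  set F := hf.toLp f
  have hF : ∀ n, mFourierCoeff F n = mFourierCoeff f n := fun n =>
    integral_congr_ae (by filter_upwards [hf.coeFn_toLp] with x hx; rw [hx])
  have hrel : ∀ n, mFourierCoeff F n = conj (c n) * mFourierCoeff F (A n) := fun n => by
    simpa only [hF] using mFourierCoeff_eq_of_comp_eq hT hf.1 hfT (hTA n)
  have hvanish : ∀ n ≠ 0, mFourierCoeff F n = 0 := by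
    intro n hn
    rcases horbit n hn with ⟨hfix, hc1⟩ | hinj
    · have h := hrel n
      rw [hfix] at h
      by_contra hne
      exact hc1 (by simpa using congrArg conj ((mul_eq_right₀ hne).1 h.symm))
    · refine mFourierCoeff_eq_zero_of_injective_orbit F (fun m => ?_) hinj
      rw [hrel m, norm_mul, RCLike.norm_conj, hc, one_mul]
  exact ⟨_, hf.coeFn_toLp.symm.trans (ae_eq_const_of_mFourierCoeff_eq_zero F hvanish)⟩

def skewDual (n : Fin 3 → ℤ) : Fin 3 → ℤ := ![n 0 + n 1, n 1, n 2]

theorem iterate_skewDual (k : ℕ) (n : Fin 3 → ℤ) :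
    skewDual^[k] n = ![n 0 + k * n 1, n 1, n 2] := by
  induction k with
  | zero => ext i; fin_cases i <;> simp
  | succ k ih =>
    rw [iterate_succ_apply', ih]
    ext i; fin_cases i <;> simp [skewDual]
    ring

theorem mFourier_skewProduct (α β : ℝ) (n : Fin 3 → ℤ) (x : UnitAddTorus (Fin 3)) :
    mFourier n ![x 0 + α, x 1 + x 0, x 2 + β] =
      fourier (n 0) (α : UnitAddCircle) * fourier (n 2) (β : UnitAddCircle) *
        mFourier (skewDual n) x := by
  simp only [mFourier, ContinuousMap.coe_mk, Fin.prod_univ_three, skewDual, Matrix.cons_val_zero,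
    Matrix.cons_val_one, Matrix.cons_val, fourier_apply, smul_add, AddCircle.toCircle_add,
    Circle.coe_mul, add_zsmul]
  ring

theorem skewDual_eq_self_or_injective_iterate {α β : ℝ}
    (h : LinearIndependent ℚ ![(1 : ℝ), α, β]) {n : Fin 3 → ℤ} (hn : n ≠ 0) :
    (skewDual n = n ∧ fourier (n 0) (α : UnitAddCircle) * fourier (n 2) (β : UnitAddCircle) ≠ 1) ∨
      Injective fun k : ℕ => skewDual^[k] n := by
  by_cases h1 : n 1 = 0
  · left
    refine ⟨?_, fourier_mul_fourier_ne_one h ?_⟩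
    · ext i; fin_cases i <;> simp [skewDual, h1]
    · by_contra! h02
      exact hn (by ext i; fin_cases i <;> simp [h02, h1])
  · right
    intro k l hkl
    simpa [iterate_skewDual, h1] using congrFun hkl 0

end UnitAddTorus

/-- The skew product `(t, y₁, y₂) ↦ (t + α, y₁ + t, y₂ + β)` on the 3-torus is
ergodic when `1, α, β` are linearly independent over `ℚ`. -/
theorem skew_product_torus_ergodic (α β : ℝ)
    (h : LinearIndependent ℚ ![(1 : ℝ), α, β]) :
    Ergodic
      (fun p : UnitAddCircle × UnitAddCircle × UnitAddCircle =>
        ((p.1 + (α : UnitAddCircle), p.2.1 + p.1, p.2.2 + (β : UnitAddCircle))))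
      (volume : Measure (UnitAddCircle × UnitAddCircle × UnitAddCircle)) := by
  set μ : Measure UnitAddCircle := AddCircle.haarAddCircle
  set E := MeasurableEquiv.piFinThree UnitAddCircle
  have hE : MeasurePreserving E (Measure.pi fun _ => μ) volume := by
    have hvol : (volume : Measure UnitAddCircle) = μ := by
      simp [μ, AddCircle.volume_eq_smul_haarAddCircle]
    rw [show (volume : Measure (UnitAddCircle × UnitAddCircle × UnitAddCircle))
      = volume.prod (volume.prod volume) from rfl, hvol]
    exact measurePreserving_piFinThree μ
  set T' := fun x : UnitAddTorus (Fin 3) => ![x 0 + (α : UnitAddCircle), x 1 + x 0, x 2 + β]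
  have hconj : E ∘ T' ∘ E.symm =
      fun p => ((p.1 + (α : UnitAddCircle), p.2.1 + p.1, p.2.2 + (β : UnitAddCircle))) := by
    ext p <;> simp [E, T']
  have hT' : MeasurePreserving T' (Measure.pi fun _ => μ) (Measure.pi fun _ => μ) :=
    hE.comp_left_iff.1 <| (hE.symm _).comp_right_iff.1 <|
      hconj ▸ measurePreserving_skewProduct volume (α : UnitAddCircle) β
  rw [← hconj, hE.ergodic_conjugate_iff]
  refine ergodic_of_mFourier_comp hT' skewDual _ (fun n => ?_) (mFourier_skewProduct α β)
    fun n hn => skewDual_eq_self_or_injective_iterate h hn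
  rw [norm_mul, fourier_apply, fourier_apply, Circle.norm_coe, Circle.norm_coe, one_mul]
end

section
/- Let F : S¹ × Y → ℝ be continuous and h : S¹ → Maps(Y) continuous, such that |∫₀¹ F(s, h(t)^{-1}y) dt| < ε/3 for all s ∈ S¹ and y ∈ Y. Then for every integer M ≥ 1 sufficiently large (M > N where N is the modulus of continuity parameter with |F(t',y) − F(t'',y)| < ε/9 for |t'−t''| < 1/N), the rescaled loop g(t) = h(Mt) satisfies |∫₀¹ F(t, g(t)^{-1}y) dt| < ε for all y ∈ Y. -/
/-!
Write `f s u = F(s, h(u)⁻¹ y)`, so the integral in question is `∫₀¹ f(t, Mt) dt`, with a slow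
variable `t` and a fast variable `Mt`. On each cell `[i/M, (i+1)/M]` the fast variable runs through
exactly one period, so freezing the slow variable at `i/M` yields `1/M` times an average of `f(i/M, ·)`
over a period, of size `< ε/(3M)`; freezing costs at most `ε/(9M)` because the cell is shorter than
`1/N`. Summing over the `M` cells gives `ε/3 + ε/9 < ε`.
-/

open MeasureTheory intervalIntegral

theorem Function.Periodic.intervalIntegral_comp_mul_div {E : Type*} [NormedAddCommGroup E]
    [NormedSpace ℝ E] {g : ℝ → E} (hg : Function.Periodic g 1) {M : ℝ} (hM : M ≠ 0) (c : ℝ) :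
    ∫ t in c / M..(c + 1) / M, g (M * t) = M⁻¹ • ∫ u in (0 : ℝ)..1, g u := by
  rw [integral_comp_mul_left g hM, mul_div_cancel₀ c hM, mul_div_cancel₀ _ hM]
  simpa using congrArg (M⁻¹ • ·) (hg.intervalIntegral_add_eq c 0)

section SlowFast

variable {f : ℝ → ℝ → ℝ} {A B : ℝ}

theorem abs_intervalIntegral_comp_mul_cell_le (hf : Continuous (Function.uncurry f))
    (hper : ∀ s, Function.Periodic (f s) 1) {M : ℝ} (hM : 0 < M) (c : ℝ)
    (hA : |∫ u in (0 : ℝ)..1, f (c / M) u| ≤ A)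
    (hB : ∀ t ∈ Set.Icc (c / M) ((c + 1) / M), ∀ u, |f t u - f (c / M) u| ≤ B) :
    |∫ t in c / M..(c + 1) / M, f t (M * t)| ≤ (A + B) / M := by
  set a := c / M
  set b := (c + 1) / M
  have hab : a ≤ b := div_le_div_of_nonneg_right (by linarith) hM.le
  have hlen : b - a = 1 / M := by simp only [a, b]; field_simp; ring
  have hmoving : IntervalIntegrable (fun t => f t (M * t)) volume a b :=
    (hf.comp (continuous_id.prodMk (continuous_const.mul continuous_id))).intervalIntegrable a b
  have hfrozen_int : IntervalIntegrable (fun t => f a (M * t)) volume a b :=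
    (hf.comp (continuous_const.prodMk (continuous_const.mul continuous_id))).intervalIntegrable a b
  have hfrozen : |∫ t in a..b, f a (M * t)| ≤ A / M := by
    rw [(hper a).intervalIntegral_comp_mul_div hM.ne' c, smul_eq_mul, abs_mul,
      abs_inv, abs_of_pos hM, inv_mul_eq_div]
    gcongr
  have herr : |∫ t in a..b, (f t (M * t) - f a (M * t))| ≤ B / M := by
    have hbound : ∀ t ∈ Set.uIoc a b, ‖f t (M * t) - f a (M * t)‖ ≤ B := fun t ht => by
      rw [Set.uIoc_of_le hab] at ht
      exact hB t (Set.Ioc_subset_Icc_self ht) _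
    calc _ ≤ B * |b - a| := norm_integral_le_of_norm_le_const hbound
      _ = B / M := by rw [hlen, abs_of_pos (by positivity)]; ring
  calc |∫ t in a..b, f t (M * t)|
      = |(∫ t in a..b, f a (M * t)) + ∫ t in a..b, (f t (M * t) - f a (M * t))| := by
        rw [integral_sub hmoving hfrozen_int, add_sub_cancel]
    _ ≤ A / M + B / M := (abs_add_le _ _).trans (add_le_add hfrozen herr)
    _ = (A + B) / M := by ring

theorem abs_intervalIntegral_comp_mul_le (hf : Continuous (Function.uncurry f))
    (hper : ∀ s, Function.Periodic (f s) 1) {M : ℕ} (hM : 0 < M)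
    (hA : ∀ s, |∫ u in (0 : ℝ)..1, f s u| ≤ A)
    (hB : ∀ t t' u, |t - t'| ≤ 1 / (M : ℝ) → |f t u - f t' u| ≤ B) :
    |∫ t in (0 : ℝ)..1, f t (M * t)| ≤ A + B := by
  have hMr : (0 : ℝ) < M := by exact_mod_cast hM
  have hcells : ∑ i ∈ Finset.range M, ∫ t in (i : ℝ) / M..((i + 1 : ℕ) : ℝ) / M, f t (M * t)
      = ∫ t in (0 : ℝ)..1, f t (M * t) := by
    rw [sum_integral_adjacent_intervals (f := fun t => f t (M * t))
      (a := fun i : ℕ => (i : ℝ) / M) fun _ _ =>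
      (hf.comp (continuous_id.prodMk (continuous_const.mul continuous_id))).intervalIntegrable _ _]
    simp [hMr.ne']
  have hcell : ∀ i : ℕ,
      |∫ t in (i : ℝ) / M..((i + 1 : ℕ) : ℝ) / M, f t (M * t)| ≤ (A + B) / M := fun i => by
    push_cast
    refine abs_intervalIntegral_comp_mul_cell_le hf hper hMr i (hA _) fun t ht u => hB _ _ _ ?_
    rw [abs_of_nonneg (sub_nonneg.2 ht.1)]
    calc t - i / M ≤ (i + 1) / M - i / M := by linarith [ht.2]
      _ = 1 / M := by ring
  rw [← hcells]
  calc _ ≤ ∑ i ∈ Finset.range M, |∫ t in (i : ℝ) / M..((i + 1 : ℕ) : ℝ) / M, f t (M * t)| :=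
        Finset.abs_sum_le_sum_abs _ _
    _ ≤ ∑ _i ∈ Finset.range M, (A + B) / M := Finset.sum_le_sum fun i _ => hcell i
    _ = A + B := by rw [Finset.sum_const, Finset.card_range, nsmul_eq_mul]; field_simp

end SlowFast

theorem rescaled_loop_bound_general {Y : Type*} [TopologicalSpace Y]
    (F : UnitAddCircle × Y → ℝ) (hF : Continuous F)
    (h : ℝ → Y ≃ Y) (hh : Continuous fun p : ℝ × Y => (h p.1).symm p.2)
    (hper : ∀ t : ℝ, h (t + 1) = h t)
    (N : ℕ) (hN : 0 < N) (ε : ℝ) (hε : 0 < ε)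
    (hcont : ∀ (t' t'' : ℝ) (y : Y), |t' - t''| < 1 / N →
      |F ((t' : ℝ), y) - F ((t'' : ℝ), y)| < ε / 9)
    (havg : ∀ (s : ℝ) (y : Y),
      |∫ t in (0 : ℝ)..1, F ((s : ℝ), (h t).symm y)| < ε / 3)
    (M : ℕ) (hM : N < M) :
    ∀ y : Y, |∫ t in (0 : ℝ)..1, F ((t : ℝ), (h (M * t)).symm y)| < ε := by
  intro y
  have hf : Continuous fun p : ℝ × ℝ => F ((p.1 : UnitAddCircle), (h p.2).symm y) :=
    hF.comp ((continuous_quotient_mk'.comp continuous_fst).prodMk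
      (hh.comp (continuous_snd.prodMk continuous_const)))
  have hmesh : (1 : ℝ) / M < 1 / N := by gcongr
  have hbound := abs_intervalIntegral_comp_mul_le (f := fun s u => F (s, (h u).symm y)) hf
    (fun s u => by simp only [hper u]) (hN.trans hM) (fun s => (havg s y).le)
    (fun t t' u htt' => (hcont t t' _ (htt'.trans_lt hmesh)).le)
  linarith

/-- Step 4 of Section 5.1: if the averaged integrals of `F(s, h(t)⁻¹ y)` are
`< ε/3` for all `s`, then for any sufficiently large `M` (exceeding the
modulus-of-continuity parameter `N`) the rescaled loop `g(t) = h(Mt)`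
satisfies `|∫₀¹ F(t, g(t)⁻¹ y) dt| < ε`. -/
theorem rescaled_loop_bound {Y : Type*} [TopologicalSpace Y] [CompactSpace Y]
    (F : UnitAddCircle × Y → ℝ) (hF : Continuous F)
    (h : ℝ → Y ≃ Y) (hh : Continuous fun p : ℝ × Y => (h p.1).symm p.2)
    (hper : ∀ t : ℝ, h (t + 1) = h t)
    (N : ℕ) (hN : 0 < N) (ε : ℝ) (hε : 0 < ε)
    (hcont : ∀ (t' t'' : ℝ) (y : Y), |t' - t''| < 1 / N →
      |F ((t' : ℝ), y) - F ((t'' : ℝ), y)| < ε / 9)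
    (havg : ∀ (s : ℝ) (y : Y),
      |∫ t in (0 : ℝ)..1, F ((s : ℝ), (h t).symm y)| < ε / 3)
    (M : ℕ) (hM : N < M) :
    ∀ y : Y, |∫ t in (0 : ℝ)..1, F ((t : ℝ), (h (M * t)).symm y)| < ε :=
  rescaled_loop_bound_general F hF h hh hper N hN ε hε hcont havg M hM
end
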